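/- arXiv:1607.00339 — 2 statements merged into one kernel-verified Lean document; each statement's English description precedes it below -/
import Mathlib

section
/- Let (P_m)_{m≥1} be a bounded polynomial sequence. Then for all 0 ≤ m ≤ n, the preimage Q_{m,n}⁻¹(𝒥_n) equals 𝒥_m, and the image Q_{m,n}(𝒥_m) equals 𝒥_n. -/
open Filter

/-- `Qcomp P m n z` is the value at `z` of the composition
`Q_{m,n} = P_n ∘ ⋯ ∘ P_{m+1}` (with `Q_{m,m} = id`). -/
noncomputable def Qcomp (P : ℕ → Polynomial ℂ) (m n : ℕ) (z : ℂ) : ℂ :=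
  (List.range (n - m)).foldl (fun w k => (P (m + k + 1)).eval w) z

/-- A bounded polynomial sequence with bounds `d`, `K`, `M`. -/
def IsBoundedPolySeq (d : ℕ) (K M : ℝ) (P : ℕ → Polynomial ℂ) : Prop :=
  ∀ m, 1 ≤ m →
    2 ≤ (P m).natDegree ∧ (P m).natDegree ≤ d ∧
    1 / K ≤ ‖(P m).leadingCoeff‖ ∧
    ‖(P m).leadingCoeff‖ ≤ K ∧
    ∀ k, k < (P m).natDegree → ‖(P m).coeff k‖ ≤ M

/-- The `m`-th iterated filled Julia set. -/
def filledJulia (P : ℕ → Polynomial ℂ) (m : ℕ) : Set ℂ :=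
  {z | ∃ C : ℝ, ∀ n, m ≤ n → ‖Qcomp P m n z‖ ≤ C}

/-- The `m`-th iterated basin of attraction of infinity. -/
def basinInfty (P : ℕ → Polynomial ℂ) (m : ℕ) : Set ℂ :=
  {z | Tendsto (fun n => ‖Qcomp P m n z‖) atTop atTop}

/-- The `m`-th iterated Julia set. -/
def juliaSet (P : ℕ → Polynomial ℂ) (m : ℕ) : Set ℂ :=
  frontier (filledJulia P m)

/-!
Since `Q_{m,k} = Q_{n,k} ∘ Q_{m,n}` for `m ≤ n ≤ k` and the finitely many values
`Q_{m,k}(z)`, `m ≤ k < n`, are bounded anyway, `Q_{m,n}⁻¹(𝒦_n) = 𝒦_m`. As a polynomial of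
degree `d_{m+1} ⋯ d_n ≥ 1`, `Q_{m,n}` is continuous, open and surjective; preimages under such a
map commute with frontiers, and surjectivity turns the preimage statement into the image one.
-/

open Polynomial Set

section Qcomp

variable (P : ℕ → ℂ[X])

lemma Qcomp_self (m : ℕ) (z : ℂ) : Qcomp P m m z = z := by
  simp [Qcomp]

lemma Qcomp_succ {m n : ℕ} (h : m ≤ n) (z : ℂ) :
    Qcomp P m (n + 1) z = (P (n + 1)).eval (Qcomp P m n z) := by
  have hlen : n + 1 - m = (n - m) + 1 := by omega
  have hidx : m + (n - m) + 1 = n + 1 := by omega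
  simp [Qcomp, hlen, List.range_succ, hidx]

lemma Qcomp_trans {m n k : ℕ} (hmn : m ≤ n) (hnk : n ≤ k) (z : ℂ) :
    Qcomp P n k (Qcomp P m n z) = Qcomp P m k z := by
  induction k, hnk using Nat.le_induction with
  | base => rw [Qcomp_self]
  | succ k hk ih => rw [Qcomp_succ P hk, Qcomp_succ P (hmn.trans hk), ih]

lemma exists_natDegree_ne_zero_eval_eq_Qcomp {m : ℕ} (hP : ∀ k, m < k → (P k).natDegree ≠ 0)
    {n : ℕ} (hmn : m ≤ n) : ∃ q : ℂ[X], q.natDegree ≠ 0 ∧ q.eval = Qcomp P m n := by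
  induction n, hmn using Nat.le_induction with
  | base => exact ⟨X, by simp, funext fun z => by simp [Qcomp_self]⟩
  | succ n hmn ih =>
    obtain ⟨q, hq, hqQ⟩ := ih
    refine ⟨(P (n + 1)).comp q, ?_, funext fun z => ?_⟩
    · rw [natDegree_comp]
      exact mul_ne_zero (hP (n + 1) (by omega)) hq
    · rw [eval_comp, Qcomp_succ P hmn, ← hqQ]

lemma isOpenQuotientMap_Qcomp {m : ℕ} (hP : ∀ k, m < k → (P k).natDegree ≠ 0)
    {n : ℕ} (hmn : m ≤ n) : IsOpenQuotientMap (Qcomp P m n) := by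
  obtain ⟨q, hq, hqQ⟩ := exists_natDegree_ne_zero_eval_eq_Qcomp P hP hmn
  exact hqQ ▸ q.isOpenQuotientMap_eval hq

lemma mem_filledJulia_iff_bddAbove (m : ℕ) (z : ℂ) :
    z ∈ filledJulia P m ↔ BddAbove ((fun k => ‖Qcomp P m k z‖) '' Ici m) := by
  simp [filledJulia, bddAbove_def]

lemma preimage_Qcomp_filledJulia {m n : ℕ} (hmn : m ≤ n) :
    Qcomp P m n ⁻¹' filledJulia P n = filledJulia P m := by
  ext z
  have horbit : (fun k => ‖Qcomp P m k z‖) '' Ici m =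
      (fun k => ‖Qcomp P m k z‖) '' Ico m n ∪ (fun k => ‖Qcomp P n k (Qcomp P m n z)‖) '' Ici n := by
    rw [← Ico_union_Ici_eq_Ici hmn, image_union]
    congr 1
    exact image_congr fun k hk => by rw [Qcomp_trans P hmn hk]
  rw [mem_preimage, mem_filledJulia_iff_bddAbove, mem_filledJulia_iff_bddAbove, horbit,
    bddAbove_union, and_iff_right ((finite_Ico m n).image _).bddAbove]

end Qcomp

lemma IsBoundedPolySeq.natDegree_ne_zero {d : ℕ} {K M : ℝ} {P : ℕ → ℂ[X]}
    (hP : IsBoundedPolySeq d K M P) {k : ℕ} (hk : 0 < k) : (P k).natDegree ≠ 0 := by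
  have := (hP k hk).1
  omega

lemma IsOpenQuotientMap.image_frontier_preimage {X Y : Type*} [TopologicalSpace X]
    [TopologicalSpace Y] {f : X → Y} (hf : IsOpenQuotientMap f) (s : Set Y) :
    f '' frontier (f ⁻¹' s) = frontier s := by
  rw [← hf.isOpenMap.preimage_frontier_eq_frontier_preimage hf.continuous,
    image_preimage_eq _ hf.surjective]

theorem juliaSet_invariance_general (d : ℕ) (K M : ℝ)
    (P : ℕ → Polynomial ℂ) (hP : IsBoundedPolySeq d K M P) (m n : ℕ) (hmn : m ≤ n) :
    (fun z => Qcomp P m n z) ⁻¹' juliaSet P n = juliaSet P m ∧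
    (fun z => Qcomp P m n z) '' juliaSet P m = juliaSet P n := by
  have hQ := isOpenQuotientMap_Qcomp P (fun k hk => hP.natDegree_ne_zero (by omega)) hmn
  rw [juliaSet, juliaSet, ← preimage_Qcomp_filledJulia P hmn]
  exact ⟨hQ.isOpenMap.preimage_frontier_eq_frontier_preimage hQ.continuous _,
    hQ.image_frontier_preimage _⟩

/-- For a bounded polynomial sequence and `m ≤ n`,
`Q_{m,n}⁻¹(𝒥_n) = 𝒥_m` and `Q_{m,n}(𝒥_m) = 𝒥_n`. -/
theorem juliaSet_invariance (d : ℕ) (hd : 2 ≤ d) (K M : ℝ) (hK : 1 ≤ K) (hM : 0 ≤ M)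
    (P : ℕ → Polynomial ℂ) (hP : IsBoundedPolySeq d K M P) (m n : ℕ) (hmn : m ≤ n) :
    (fun z => Qcomp P m n z) ⁻¹' juliaSet P n = juliaSet P m ∧
    (fun z => Qcomp P m n z) '' juliaSet P m = juliaSet P n :=
  juliaSet_invariance_general d K M P hP m n hmn
end

section
/- Let d ≥ 2 be an integer, let a ≠ b be points of ℝ/ℤ, let ℓ = ℓ(a,b), and suppose d·a ≠ d·b (equivalently, d·ℓ is not an integer). Then for every y ∈ ℝ/ℤ, the number of points x in the open arc (a,b) with d·x = y equals ⌊dℓ⌋ + 1 if y lies in the open arc (d·a, d·b), and equals ⌊dℓ⌋ otherwise. -/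
/-!
Write `x = a + t` with `t ∈ (0, ℓ)` and let `s = ℓ(d·a, y) ∈ [0, 1)`. Then `d·x = y` says
`d t = s + k` for an integer `k`, and since `(0, ℓ)` is shorter than a period this sets up a
bijection between the preimages in the arc and the integers in `(-s, dℓ - s)`. Writing
`dℓ = ⌊dℓ⌋ + f` with `f = ℓ(d·a, d·b) ∈ (0, 1)`, that interval contains `⌊dℓ⌋ + 1` integers
when `0 < s < f`, i.e. when `y ∈ (d·a, d·b)`, and `⌊dℓ⌋` integers otherwise.
-/

/-- The unique representative in `[0,1)` of `b - a`; for `a ≠ b` this is the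
unique representative of `b − a` in `(0,1)`, the length `ℓ(a,b)` of the arc from `a` to `b`. -/
noncomputable def arcLen (a b : UnitAddCircle) : ℝ :=
  ((AddCircle.equivIco 1 0) (b - a) : ℝ)

/-- The open arc `(a,b) = {a + t : 0 < t < ℓ(a,b)}` in `ℝ/ℤ`. -/
def openArc (a b : UnitAddCircle) : Set UnitAddCircle :=
  {x | ∃ t : ℝ, 0 < t ∧ t < arcLen a b ∧ x = a + (t : UnitAddCircle)}

open Set

lemma coe_arcLen (a b : UnitAddCircle) : (arcLen a b : UnitAddCircle) = b - a :=
  (AddCircle.equivIco 1 0).symm_apply_apply (b - a)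

lemma arcLen_mem_Ico (a b : UnitAddCircle) : arcLen a b ∈ Ico 0 1 := by
  simpa [arcLen] using ((AddCircle.equivIco 1 0) (b - a)).2

lemma arcLen_add_coe (a : UnitAddCircle) (r : ℝ) : arcLen a (a + r) = Int.fract r := by
  simp [arcLen]

lemma arcLen_add_coe_of_mem_Ico (a : UnitAddCircle) {r : ℝ} (hr : r ∈ Ico 0 1) :
    arcLen a (a + r) = r := by
  rw [arcLen_add_coe, Int.fract_eq_self.2 hr]

lemma arcLen_pos {a b : UnitAddCircle} (hab : a ≠ b) : 0 < arcLen a b := by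
  refine (arcLen_mem_Ico a b).1.lt_of_ne fun h => hab ?_
  rw [eq_comm, ← sub_eq_zero, ← coe_arcLen, ← h, AddCircle.coe_zero]

lemma arcLen_nsmul (d : ℕ) (a b : UnitAddCircle) :
    arcLen (d • a) (d • b) = Int.fract (d * arcLen a b) := by
  have : d • b = d • a + ((d * arcLen a b : ℝ) : UnitAddCircle) := by
    rw [← nsmul_eq_mul, AddCircle.coe_nsmul, coe_arcLen, ← smul_add, add_sub_cancel]
  rw [this, arcLen_add_coe]

lemma mem_openArc_iff {a b x : UnitAddCircle} :
    x ∈ openArc a b ↔ 0 < arcLen a x ∧ arcLen a x < arcLen a b := by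
  constructor
  · rintro ⟨t, ht0, htℓ, rfl⟩
    rw [arcLen_add_coe_of_mem_Ico a ⟨ht0.le, htℓ.trans (arcLen_mem_Ico a b).2⟩]
    exact ⟨ht0, htℓ⟩
  · rintro ⟨h0, hℓ⟩
    exact ⟨arcLen a x, h0, hℓ, by rw [coe_arcLen, add_sub_cancel]⟩

lemma AddCircle.coe_eq_coe_iff_exists_zsmul {𝕜 : Type*} [AddCommGroup 𝕜] {p r r' : 𝕜} :
    (r : AddCircle p) = r' ↔ ∃ k : ℤ, r = r' + k • p := by
  simp only [← sub_eq_zero (a := (r : AddCircle p)), ← AddCircle.coe_sub,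
    AddCircle.coe_eq_zero_iff, eq_comm (b := r - r'), sub_eq_iff_eq_add']

lemma nsmul_add_coe_eq_iff (d : ℕ) (a y : UnitAddCircle) (t : ℝ) :
    d • (a + t) = y ↔ ∃ k : ℤ, d * t = arcLen (d • a) y + k := by
  have hcoe := AddCircle.coe_eq_coe_iff_exists_zsmul (p := (1 : ℝ)) (r := d * t)
    (r' := arcLen (d • a) y)
  simp only [zsmul_one] at hcoe
  rw [← hcoe, coe_arcLen, eq_sub_iff_add_eq', smul_add, ← nsmul_eq_mul, AddCircle.coe_nsmul]

lemma ncard_setOf_mem_openArc_nsmul_eq {d : ℕ} (hd : d ≠ 0) (a b y : UnitAddCircle) :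
    {x | x ∈ openArc a b ∧ d • x = y}.ncard =
      {k : ℤ | -arcLen (d • a) y < k ∧ k < d * arcLen a b - arcLen (d • a) y}.ncard := by
  set s := arcLen (d • a) y
  set ℓ := arcLen a b
  set K := {k : ℤ | -s < k ∧ k < d * ℓ - s}
  have hd_pos : (0 : ℝ) < d := by positivity
  have mem_Ioo : ∀ k ∈ K, (s + k) / d ∈ Ioo 0 ℓ := fun k ⟨hk0, hkℓ⟩ =>
    ⟨div_pos (by linarith) hd_pos, by rw [div_lt_iff₀' hd_pos]; linarith⟩
  let F : ℤ → UnitAddCircle := fun k => a + (((s + k) / d : ℝ) : UnitAddCircle)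
  have hS : {x | x ∈ openArc a b ∧ d • x = y} = F '' K := by
    ext x
    constructor
    · rintro ⟨⟨t, ht0, htℓ, rfl⟩, hdx⟩
      obtain ⟨k, hk : d * t = s + k⟩ := (nsmul_add_coe_eq_iff d a y t).1 hdx
      refine ⟨k, ⟨?_, ?_⟩, ?_⟩
      · linarith [mul_pos hd_pos ht0]
      · linarith [mul_lt_mul_of_pos_left htℓ hd_pos]
      · simp only [F, ← hk, mul_div_cancel_left₀ t hd_pos.ne']
    · rintro ⟨k, hk, rfl⟩
      exact ⟨⟨_, (mem_Ioo k hk).1, (mem_Ioo k hk).2, rfl⟩,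
        (nsmul_add_coe_eq_iff d a y _).2 ⟨k, mul_div_cancel₀ _ hd_pos.ne'⟩⟩
  have hinj : InjOn F K := by
    intro k hk k' hk' hkk'
    have hmem : ∀ k ∈ K, (s + k) / d ∈ Ico (0 : ℝ) 1 := fun k hk =>
      ⟨(mem_Ioo k hk).1.le, (mem_Ioo k hk).2.trans (arcLen_mem_Ico a b).2⟩
    have := congrArg (arcLen a) hkk'
    simp only [F, arcLen_add_coe_of_mem_Ico a (hmem k hk),
      arcLen_add_coe_of_mem_Ico a (hmem k' hk')] at this
    exact_mod_cast add_left_cancel ((div_left_inj' hd_pos.ne').1 this)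
  rw [hS, hinj.ncard_image]

lemma ncard_setOf_int_mem_Ioo (u v : ℝ) :
    {k : ℤ | u < k ∧ k < v}.ncard = (⌈v⌉ - ⌊u⌋ - 1).toNat := by
  have : {k : ℤ | u < k ∧ k < v} = ↑(Finset.Ioo ⌊u⌋ ⌈v⌉) := by
    ext k
    simp [Int.floor_lt, Int.lt_ceil]
  rw [this, ncard_coe_finset, Int.card_Ioo]

lemma ceil_sub_add_ceil_sub_one {f s : ℝ} (hf : f ∈ Ioo 0 1) (hs : s ∈ Ico 0 1) :
    ⌈f - s⌉ + ⌈s⌉ - 1 = if s ∈ Ioo 0 f then 1 else 0 := by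
  obtain rfl | hs0 := hs.1.eq_or_lt
  · simp [sub_eq_zero, Int.ceil_eq_iff, hf.1, hf.2.le]
  have hs1 : ⌈s⌉ = 1 := Int.ceil_eq_iff.2 ⟨by simpa using hs0, by simpa using hs.2.le⟩
  split_ifs with hsf
  · rw [hs1, Int.ceil_eq_iff (z := 1).2 ⟨by simpa using hsf.2, by push_cast; linarith [hf.2]⟩]
    rfl
  · have hfs : f ≤ s := le_of_not_gt fun h => hsf ⟨hs0, h⟩
    rw [hs1, Int.ceil_eq_iff (z := 0).2 ⟨by push_cast; linarith [hs.2, hf.1], by simpa using hfs⟩]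
    rfl

lemma ncard_setOf_int_mem_Ioo_neg_sub {x s : ℝ} (hx : 0 ≤ x) (hfx : 0 < Int.fract x)
    (hs : s ∈ Ico 0 1) :
    {k : ℤ | -s < k ∧ k < x - s}.ncard = ⌊x⌋₊ + if s ∈ Ioo 0 (Int.fract x) then 1 else 0 := by
  have hx_sub : x - s = (Int.fract x - s) + ⌊x⌋ := by
    rw [Int.fract]
    ring
  rw [ncard_setOf_int_mem_Ioo, Int.floor_neg, hx_sub, Int.ceil_add_intCast, ← Int.floor_toNat,
    show ⌈Int.fract x - s⌉ + ⌊x⌋ - -⌈s⌉ - 1 = ⌊x⌋ + (⌈Int.fract x - s⌉ + ⌈s⌉ - 1) by ring,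
    ceil_sub_add_ceil_sub_one ⟨hfx, Int.fract_lt_one x⟩ hs]
  split_ifs
  exacts [Int.toNat_add_nat (Int.floor_nonneg.2 hx) 1, by simp]

theorem count_preimages_in_arc_general (d : ℕ) (a b : UnitAddCircle)
    (h : d • a ≠ d • b) (y : UnitAddCircle) :
    (y ∈ openArc (d • a) (d • b) →
      {x | x ∈ openArc a b ∧ d • x = y}.ncard = ⌊(d : ℝ) * arcLen a b⌋₊ + 1) ∧
    (y ∉ openArc (d • a) (d • b) →
      {x | x ∈ openArc a b ∧ d • x = y}.ncard = ⌊(d : ℝ) * arcLen a b⌋₊) := by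
  have hd : d ≠ 0 := by
    rintro rfl
    simp at h
  have hfract : 0 < Int.fract (d * arcLen a b) := arcLen_nsmul d a b ▸ arcLen_pos h
  have hy : y ∈ openArc (d • a) (d • b) ↔
      arcLen (d • a) y ∈ Ioo 0 (Int.fract (d * arcLen a b)) := by
    rw [mem_openArc_iff, arcLen_nsmul, mem_Ioo]
  rw [ncard_setOf_mem_openArc_nsmul_eq hd, ncard_setOf_int_mem_Ioo_neg_sub
    (mul_nonneg d.cast_nonneg (arcLen_mem_Ico a b).1) hfract (arcLen_mem_Ico _ _)]
  exact ⟨fun hin => by rw [if_pos (hy.1 hin)],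
    fun hout => by rw [if_neg (hy.not.1 hout), add_zero]⟩

/-- Let `d ≥ 2`, `a ≠ b` in `ℝ/ℤ`, `ℓ = ℓ(a,b)`, and suppose `d·a ≠ d·b`.
Then for every `y`, the number of `x` in the open arc `(a,b)` with `d·x = y`
is `⌊dℓ⌋ + 1` if `y ∈ (d·a, d·b)` and `⌊dℓ⌋` otherwise. -/
theorem count_preimages_in_arc (d : ℕ) (hd : 2 ≤ d) (a b : UnitAddCircle) (hab : a ≠ b)
    (h : d • a ≠ d • b) (y : UnitAddCircle) :
    (y ∈ openArc (d • a) (d • b) →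
      {x | x ∈ openArc a b ∧ d • x = y}.ncard = ⌊(d : ℝ) * arcLen a b⌋₊ + 1) ∧
    (y ∉ openArc (d • a) (d • b) →
      {x | x ∈ openArc a b ∧ d • x = y}.ncard = ⌊(d : ℝ) * arcLen a b⌋₊) :=
  count_preimages_in_arc_general d a b h y
end
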